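/- arXiv:1311.6686 — 5 statements merged into one kernel-verified Lean document; each statement's English description precedes it below -/
import Mathlib

section
/- If A is an n×m matrix and B an m×n matrix over a field, then pdet(AB) = pdet(BA). -/
open Polynomial

/-- The pseudodeterminant of a square matrix: the last nonzero coefficient of the
unsigned characteristic polynomial `det (t • 1 + L)`. -/
noncomputable def pdet {n : ℕ} {K : Type*} [CommRing K]
    (L : Matrix (Fin n) (Fin n) K) : K :=
  (Matrix.charpoly (-L)).trailingCoeff

theorem Polynomial.trailingCoeff_X_pow_mul {R : Type*} [Semiring R] (p : R[X]) (k : ℕ) :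
    (X ^ k * p).trailingCoeff = p.trailingCoeff := by
  rw [← reverse_leadingCoeff, reverse_X_pow_mul, reverse_leadingCoeff]

theorem Matrix.trailingCoeff_charpoly_mul_comm {m n R : Type*} [Fintype m] [DecidableEq m]
    [Fintype n] [DecidableEq n] [CommRing R] (A : Matrix m n R) (B : Matrix n m R) :
    (A * B).charpoly.trailingCoeff = (B * A).charpoly.trailingCoeff := by
  rw [← trailingCoeff_X_pow_mul _ (Fintype.card n), charpoly_mul_comm', trailingCoeff_X_pow_mul]

/-- `pdet (A * B) = pdet (B * A)` for rectangular matrices of complementary shapes. -/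
theorem pdet_mul_comm {n m : ℕ} {K : Type*} [Field K]
    (A : Matrix (Fin n) (Fin m) K) (B : Matrix (Fin m) (Fin n) K) :
    pdet (A * B) = pdet (B * A) := by
  rw [pdet, pdet, ← Matrix.neg_mul, ← Matrix.mul_neg, Matrix.trailingCoeff_charpoly_mul_comm]
end

section
/- For any n×m matrix ∂ over a commutative ring, det(tI + ∂∂ᵗ) = Σ over pairs (I,J) with I ⊆ [n], J ⊆ [m], |I| = |J|, of t^{n-|I|}·(det ∂_{I,J})², where ∂_{I,J} denotes the submatrix with rows I and columns J. -/
/-!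
Expanding `det (x • 1 + N)` multilinearly in the rows gives one term for each set `I` of rows
taken from `N`, namely `x ^ (n - |I|)` times the principal minor `det N_{I,I}`. For `N = B Bᵀ` that
minor is `det (B_{I,*} (B_{I,*})ᵀ)`, and Cauchy–Binet turns it into `∑_J (det B_{I,J})²`.
-/

open Polynomial Finset

/-- The square submatrix of `B` with rows indexed by `I` and columns by `J`
(in increasing order), defined when `I.card = J.card`, and `0` otherwise. -/
noncomputable def minorDet {n m : ℕ} {R : Type*} [CommRing R]
    (B : Matrix (Fin n) (Fin m) R) (I : Finset (Fin n)) (J : Finset (Fin m)) : R :=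
  if h : I.card = J.card then
    (B.submatrix (I.orderEmbOfFin rfl) (J.orderEmbOfFin h.symm)).det
  else 0

namespace Matrix

variable {R : Type*} [CommRing R]

section CauchyBinet

variable {ι m : Type*} [Fintype ι] [DecidableEq ι]

theorem det_mul_eq_sum_prod_mul_det_submatrix [Fintype m] (A : Matrix ι m R)
    (D : Matrix m ι R) :
    det (A * D) = ∑ r : ι → m, (∏ i, A i (r i)) * det (D.submatrix r id) := by
  have hrows : A * D = fun i => ∑ j, A i j • D j := by
    ext i k
    simp [mul_apply, Finset.sum_apply]
  rw [hrows]
  refine ((detRowAlternating : (ι → R) [⋀^ι]→ₗ[R] R).toMultilinearMap.map_sum _).trans ?_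
  refine sum_congr rfl fun r _ => ?_
  exact (detRowAlternating : (ι → R) [⋀^ι]→ₗ[R] R).map_smul_univ _ (fun i => D (r i))

theorem det_submatrix_eq_zero_of_not_injective (D : Matrix m ι R) {r : ι → m}
    (hr : ¬ Function.Injective r) : det (D.submatrix r id) = 0 := by
  obtain ⟨a, b, hab, hne⟩ := Function.not_injective_iff.1 hr
  exact det_zero_of_row_eq hne (by ext; simp [hab])

theorem sum_image_subset_eq_det_mul_det [Fintype m] [DecidableEq m] (A : Matrix ι m R)
    (D : Matrix m ι R) {e : ι → m} (he : Function.Injective e) :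
    ∑ r : ι → m with univ.image r ⊆ univ.image e, (∏ i, A i (r i)) * det (D.submatrix r id)
      = det (A.submatrix id e) * det (D.submatrix e id) := by
  have hfactor : univ.filter (fun r : ι → m => univ.image r ⊆ univ.image e)
      = univ.image (e ∘ ·) := by
    ext r
    simp only [mem_filter, mem_univ, true_and, mem_image, ← coe_subset, coe_image, coe_univ,
      Set.image_univ, Set.range_subset_range_iff_exists_comp]
    exact exists_congr fun _ => eq_comm
  rw [hfactor, sum_image (fun s _ t _ h => he.comp_left h), ← det_mul,
    det_mul_eq_sum_prod_mul_det_submatrix]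
  rfl

theorem det_mul_eq_sum_det_mul_det [Fintype m] [LinearOrder m] {k : ℕ} (A : Matrix (Fin k) m R)
    (D : Matrix m (Fin k) R) :
    det (A * D) = ∑ J : Finset m, if h : J.card = k then
      det (A.submatrix id (J.orderEmbOfFin h)) * det (D.submatrix (J.orderEmbOfFin h) id)
      else 0 := by
  have hvanish : ∀ r : Fin k → m, (univ.image r).card ≠ k →
      (∏ i, A i (r i)) * det (D.submatrix r id) = 0 := fun r hr => by
    refine mul_eq_zero_of_right _ (det_submatrix_eq_zero_of_not_injective D fun hinj => hr ?_)
    rw [card_image_of_injective _ hinj, card_univ, Fintype.card_fin]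
  -- Group the `r` by their image `J`; only injective `r` contribute, and for `#J = k` the `r` with
  -- image in `J` are the `e ∘ s` with `s : Fin k → Fin k`, which expand `det (A_J * D_J)`.
  rw [det_mul_eq_sum_prod_mul_det_submatrix, ← sum_fiberwise univ (fun r => univ.image r)]
  refine sum_congr rfl fun J _ => ?_
  split_ifs with hJ
  · rw [← sum_image_subset_eq_det_mul_det A D (J.orderEmbOfFin hJ).injective,
      image_orderEmbOfFin_univ]
    refine sum_subset (fun r => by simp +contextual) fun r hr hne => hvanish r ?_
    simp only [mem_filter, mem_univ, true_and] at hr hne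
    exact (card_lt_card (ssubset_of_subset_of_ne hr hne)).trans_eq hJ |>.ne
  · exact sum_eq_zero fun r hr => hvanish r (by rw [(mem_filter.1 hr).2]; exact hJ)

end CauchyBinet

section PrincipalMinors

variable {n : Type*} [Fintype n] [DecidableEq n]

theorem det_smul_one_add_eq_sum (x : R) (N : Matrix n n R) :
    det (x • 1 + N) = ∑ s : Finset n,
      x ^ (Fintype.card n - s.card) * det (N.submatrix ((↑) : s → n) (↑)) := by
  have hrows : x • 1 + N = (fun i => N i) + fun i => (x • 1 : Matrix n n R) i := add_comm _ _
  rw [hrows]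
  refine ((detRowAlternating : (n → R) [⋀^n]→ₗ[R] R).map_add_univ _ _).trans ?_
  refine sum_congr rfl fun s _ => ?_
  have hscale : s.piecewise (fun i => N i) (fun i => (x • 1 : Matrix n n R) i)
      = fun i => (if i ∈ s then 1 else x) • of (s.piecewise N.row (1 : Matrix n n R).row) i := by
    ext i j
    by_cases hi : i ∈ s <;> simp [hi, Finset.piecewise, Matrix.row]
  have hprod : ∏ i, (if i ∈ s then 1 else x) = x ^ (Fintype.card n - s.card) := by
    simp [prod_ite, filter_notMem_eq_sdiff, card_univ_sdiff]
  rw [hscale]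
  refine ((detRowAlternating : (n → R) [⋀^n]→ₗ[R] R).map_smul_univ _ _).trans ?_
  rw [smul_eq_mul, hprod]
  exact congrArg _ (det_piecewise_one_eq_submatrix_det N s)

end PrincipalMinors
end Matrix

open Matrix

section Minors

variable {R : Type*} [CommRing R] {n m p : ℕ}

theorem minorDet_eq_det_submatrix (B : Matrix (Fin n) (Fin m) R) {I : Finset (Fin n)}
    {J : Finset (Fin m)} {k : ℕ} (hI : I.card = k) (hJ : J.card = k) :
    minorDet B I J = det (B.submatrix (I.orderEmbOfFin hI) (J.orderEmbOfFin hJ)) := by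
  subst hI
  exact dif_pos hJ.symm

theorem minorDet_of_card_ne (B : Matrix (Fin n) (Fin m) R) {I : Finset (Fin n)}
    {J : Finset (Fin m)} (h : I.card ≠ J.card) : minorDet B I J = 0 :=
  dif_neg h

theorem minorDet_transpose (B : Matrix (Fin n) (Fin m) R) (I : Finset (Fin n))
    (J : Finset (Fin m)) : minorDet Bᵀ J I = minorDet B I J := by
  by_cases h : I.card = J.card
  · rw [minorDet_eq_det_submatrix Bᵀ rfl h, minorDet_eq_det_submatrix B h rfl, ← det_transpose,
      transpose_submatrix, transpose_transpose]
  · rw [minorDet_of_card_ne _ (Ne.symm h), minorDet_of_card_ne _ h]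

theorem minorDet_map {S : Type*} [CommRing S] (f : R →+* S) (B : Matrix (Fin n) (Fin m) R)
    (I : Finset (Fin n)) (J : Finset (Fin m)) : minorDet (B.map f) I J = f (minorDet B I J) := by
  unfold minorDet
  split_ifs
  · exact (RingHom.map_det f _).symm
  · exact (map_zero f).symm

theorem minorDet_mul (B : Matrix (Fin n) (Fin m) R) (C : Matrix (Fin m) (Fin p) R)
    (I : Finset (Fin n)) (K : Finset (Fin p)) :
    minorDet (B * C) I K = ∑ J, minorDet B I J * minorDet C J K := by
  by_cases hIK : I.card = K.card
  · rw [minorDet_eq_det_submatrix _ rfl hIK.symm, submatrix_mul _ _ _ id _ Function.bijective_id,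
      det_mul_eq_sum_det_mul_det]
    refine sum_congr rfl fun J _ => ?_
    split_ifs with hJ
    · rw [minorDet_eq_det_submatrix B rfl hJ, minorDet_eq_det_submatrix C hJ hIK.symm]
      rfl
    · rw [minorDet_of_card_ne B (Ne.symm hJ), zero_mul]
  · rw [minorDet_of_card_ne _ hIK]
    refine (sum_eq_zero fun J _ => ?_).symm
    by_cases hJ : I.card = J.card
    · rw [minorDet_of_card_ne C (hJ ▸ hIK), mul_zero]
    · rw [minorDet_of_card_ne B hJ, zero_mul]

theorem det_smul_one_add_eq_sum_minorDet (x : R) (N : Matrix (Fin n) (Fin n) R) :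
    det (x • 1 + N) = ∑ I, x ^ (n - I.card) * minorDet N I I := by
  rw [det_smul_one_add_eq_sum, Fintype.card_fin]
  refine sum_congr rfl fun I _ => ?_
  rw [minorDet_eq_det_submatrix N rfl rfl,
    ← det_submatrix_equiv_self (I.orderIsoOfFin rfl).toEquiv]
  rfl

end Minors

/-- The principal-minor / Cauchy–Binet expansion:
`det (t•1 + BBᵗ) = Σ_{I⊆[n], J⊆[m], |I|=|J|} t^(n-|I|) (det B_{I,J})²`. -/
theorem charpoly_expansion {n m : ℕ} {R : Type*} [CommRing R]
    (B : Matrix (Fin n) (Fin m) R) :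
    ((Polynomial.X : R[X]) • (1 : Matrix (Fin n) (Fin n) R[X])
        + (B * B.transpose).map Polynomial.C).det
    = ∑ I : Finset (Fin n),
        ∑ J ∈ Finset.univ.filter (fun J : Finset (Fin m) => J.card = I.card),
          Polynomial.X ^ (n - I.card) * Polynomial.C ((minorDet B I J) ^ 2) := by
  rw [det_smul_one_add_eq_sum_minorDet]
  refine sum_congr rfl fun I _ => ?_
  rw [minorDet_map, minorDet_mul, map_sum, mul_sum, sum_filter_of_ne]
  · simp_rw [minorDet_transpose, sq]
  · intro J _ hJ
    by_contra hcard
    rw [minorDet_of_card_ne B (Ne.symm hcard)] at hJ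
    simp at hJ
end

section
/- Let ∂ be a square n×n matrix of rank r over a field with ∂ᵗ = ∂ or ∂ᵗ = -∂. Then for any r-subsets I, J ⊆ [n], det(∂_{I,I})·det(∂_{J,J}) = (det ∂_{I,J})². In particular, the product of any two r×r principal minors of ∂ is a perfect square. -/
/-
A matrix of rank `r` factors as `A * B` through `Kʳ`, so by multiplicativity of the determinant
every `r × r` minor with rows `f` and columns `g` splits as `det A_f · det B_g`; hence
`det M_{I,I} · det M_{J,J} = det M_{I,J} · det M_{J,I}`. Transposing, `M_{J,I} = ± (M_{I,J})ᵀ`,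
so the right side is `± (det M_{I,J})²`. The sign `(-1)ʳ` only matters for skew-symmetric `M`
and odd `r`; then `det M_{I,I} = -det M_{I,I}`, and `2 det M_{I,I} = 0` makes the two signs agree,
in every characteristic.
-/

namespace Matrix

variable {m n ι K : Type*}

theorem exists_mul_eq_of_rank_eq [Field K] [Fintype n] {r : ℕ} (M : Matrix m n K)
    (hr : M.rank = r) : ∃ (A : Matrix m (Fin r) K) (B : Matrix (Fin r) n K), M = A * B := by
  classical
  let b : Module.Basis (Fin r) K (LinearMap.range M.mulVecLin) := Module.finBasisOfFinrankEq K _ hr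
  let col : n → LinearMap.range M.mulVecLin := fun j =>
    ⟨M.col j, LinearMap.mem_range.2 ⟨Pi.single j 1, by simp⟩⟩
  refine ⟨of fun i k => (b k : m → K) i, of fun k j => b.repr (col j) k, ?_⟩
  ext i j
  have hcol : M.col j = ∑ k, b.repr (col j) k • (b k : m → K) := by
    simpa only [Submodule.coe_sum, Submodule.coe_smul] using
      congrArg Subtype.val (b.sum_repr (col j)).symm
  simpa [mul_apply, mul_comm] using congrFun hcol i

theorem det_submatrix_mul_det_submatrix_of_rank_eq [Field K] [Fintype n] {r : ℕ}
    (M : Matrix m n K) (hr : M.rank = r) (f f' : Fin r → m) (g g' : Fin r → n) :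
    (M.submatrix f g).det * (M.submatrix f' g').det
      = (M.submatrix f g').det * (M.submatrix f' g).det := by
  obtain ⟨A, B, rfl⟩ := exists_mul_eq_of_rank_eq M hr
  simp only [submatrix_mul A B _ id _ Function.bijective_id, det_mul]
  ring

theorem det_submatrix_swap_of_transpose_eq [CommRing K] [Fintype ι] [DecidableEq ι]
    {M : Matrix m m K} (hM : Mᵀ = M) (f g : ι → m) :
    (M.submatrix g f).det = (M.submatrix f g).det := by
  rw [← det_transpose, transpose_submatrix, hM]

theorem det_submatrix_swap_of_transpose_eq_neg [CommRing K] [Fintype ι] [DecidableEq ι]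
    {M : Matrix m m K} (hM : Mᵀ = -M) (f g : ι → m) :
    (M.submatrix g f).det = (-1) ^ Fintype.card ι * (M.submatrix f g).det := by
  rw [← det_transpose, transpose_submatrix, hM]
  exact det_neg (M.submatrix f g)

end Matrix

open Matrix in
/-- For a symmetric or skew-symmetric square matrix of rank `r` and `r`-subsets
`I, J` of indices, `det M_{I,I} · det M_{J,J} = (det M_{I,J})²`. -/
theorem principal_minor_product_is_square {n r : ℕ} {K : Type*} [Field K]
    (M : Matrix (Fin n) (Fin n) K) (hsym : M.transpose = M ∨ M.transpose = -M)
    (hr : M.rank = r)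
    (I J : Finset (Fin n)) (hI : I.card = r) (hJ : J.card = r) :
    (M.submatrix (I.orderEmbOfFin hI) (I.orderEmbOfFin hI)).det *
      (M.submatrix (J.orderEmbOfFin hJ) (J.orderEmbOfFin hJ)).det
    = ((M.submatrix (I.orderEmbOfFin hI) (J.orderEmbOfFin hJ)).det) ^ 2 := by
  set f : Fin r → Fin n := ⇑(I.orderEmbOfFin hI)
  set g : Fin r → Fin n := ⇑(J.orderEmbOfFin hJ)
  have hminors := det_submatrix_mul_det_submatrix_of_rank_eq M hr f g f g
  rcases hsym with hM | hM
  · rw [hminors, det_submatrix_swap_of_transpose_eq hM, sq]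
  have hswap := det_submatrix_swap_of_transpose_eq_neg hM (ι := Fin r)
  rw [Fintype.card_fin] at hswap
  rcases Nat.even_or_odd r with heven | hodd
  · rw [hminors, hswap, heven.neg_one_pow, one_mul, sq]
  · rw [hodd.neg_one_pow] at hswap
    rw [hswap f g] at hminors
    linear_combination (M.submatrix g g).det * hswap f f - hminors
end

section
/- Let ∂ be an n×n matrix over ℝ with ∂ᵗ = ∂ or ∂ᵗ = -∂. Then pdet(∂∂ᵗ) = (pdet ∂)², where pdet denotes the product of the nonzero eigenvalues (over ℂ) with algebraic multiplicity, equivalently the last nonzero coefficient of det(tI + ·). -/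
/-!
Write `D_L(t) = det (t + L)`, so that `pdet L` is its trailing coefficient. The factorisation
`t² - A² = (t - A)(t + A)` gives `D_{-A²}(t²) = D_{-A}(t) D_A(t)`, hence
`pdet (-A²) = pdet (-A) pdet A` over any domain. For skew-symmetric `M` this is the claim, since
`MMᵀ = -M²` and `pdet (-M) = pdet Mᵀ = pdet M`. For symmetric `M` we have `MMᵀ = M² = -(iM)²`
over an algebraic closure, and scaling by `c ≠ 0` multiplies `pdet` by `c ^ r`, with `r` the
number of nonzero eigenvalues; hence `pdet (M²) = (-i)ʳ iʳ (pdet M)² = (pdet M)²`.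
-/

open Polynomial

open Matrix

namespace Polynomial

theorem natTrailingDegree_eq_of_support_eq {R S : Type*} [Semiring R] [Semiring S]
    {p : R[X]} {q : S[X]} (h : p.support = q.support) :
    p.natTrailingDegree = q.natTrailingDegree :=
  natTrailingDegree_eq_of_trailingDegree_eq (by rw [trailingDegree, trailingDegree, h])

theorem trailingCoeff_map_of_injective {R S : Type*} [Semiring R] [Semiring S] {f : R →+* S}
    (hf : Function.Injective f) (p : R[X]) :
    (p.map f).trailingCoeff = f p.trailingCoeff := by
  rw [trailingCoeff, trailingCoeff, coeff_map,
    natTrailingDegree_eq_of_support_eq (support_map_of_injective p hf)]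

variable {R : Type*} [CommSemiring R]

theorem natTrailingDegree_expand {k : ℕ} (hk : 0 < k) (p : R[X]) :
    (expand R k p).natTrailingDegree = k * p.natTrailingDegree := by
  rcases eq_or_ne p 0 with rfl | hp
  · simp
  refine le_antisymm (natTrailingDegree_le_of_ne_zero ?_)
    (le_natTrailingDegree ((expand_ne_zero hk).mpr hp) fun m hm => ?_)
  · rw [coeff_expand_mul' hk]
    exact mt trailingCoeff_eq_zero.mp hp
  · rw [coeff_expand hk]
    split_ifs
    · exact coeff_eq_zero_of_lt_natTrailingDegree (Nat.div_lt_of_lt_mul hm)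
    · rfl

theorem trailingCoeff_expand {k : ℕ} (hk : 0 < k) (p : R[X]) :
    (expand R k p).trailingCoeff = p.trailingCoeff := by
  rw [trailingCoeff, natTrailingDegree_expand hk, coeff_expand_mul' hk, trailingCoeff]

end Polynomial

namespace Matrix

variable {R : Type*} [CommRing R] {ι : Type*} [Fintype ι] [DecidableEq ι]

theorem charpoly_comp (A : Matrix ι ι R) (q : R[X]) :
    A.charpoly.comp q = (scalar ι q - C.mapMatrix A).det := by
  rw [charpoly, ← coe_compRingHom_apply, RingHom.map_det, charmatrix]
  congr 1
  ext i j
  by_cases h : i = j <;> simp [h]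

theorem charpoly_mul_self_comp_X_sq (A : Matrix ι ι R) :
    (A * A).charpoly.comp (X ^ 2) = A.charpoly * (-A).charpoly := by
  rw [charpoly_comp, charpoly, charpoly, ← det_mul, charmatrix, charmatrix, map_mul, map_neg,
    sub_neg_eq_add, sq, map_mul]
  exact congrArg det ((scalar_commute X (fun r => Commute.all _ r) _).mul_self_sub_mul_self_eq')

theorem charpoly_smul_comp_C_mul_X (c : R) (A : Matrix ι ι R) :
    (c • A).charpoly.comp (C c * X) = C c ^ Fintype.card ι * A.charpoly := by
  rw [charpoly_comp, charpoly, ← det_smul, charmatrix]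
  congr 1
  ext i j
  by_cases h : i = j <;> simp [h, mul_sub]

theorem coeff_charpoly_smul_mul_pow (c : R) (A : Matrix ι ι R) (k : ℕ) :
    (c • A).charpoly.coeff k * c ^ k = c ^ Fintype.card ι * A.charpoly.coeff k := by
  rw [← comp_C_mul_X_coeff, charpoly_smul_comp_C_mul_X, ← C_pow, coeff_C_mul]

variable [IsDomain R] {c : R}

theorem natTrailingDegree_charpoly_smul (hc : c ≠ 0) (A : Matrix ι ι R) :
    (c • A).charpoly.natTrailingDegree = A.charpoly.natTrailingDegree := by
  refine natTrailingDegree_eq_of_support_eq (Finset.ext fun k => ?_)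
  rw [mem_support_iff, mem_support_iff, ne_eq, ne_eq, ← mul_eq_zero_iff_right (pow_ne_zero k hc),
    coeff_charpoly_smul_mul_pow, mul_eq_zero_iff_left (pow_ne_zero _ hc)]

theorem trailingCoeff_charpoly_smul (hc : c ≠ 0) (A : Matrix ι ι R) :
    (c • A).charpoly.trailingCoeff =
      c ^ (Fintype.card ι - A.charpoly.natTrailingDegree) * A.charpoly.trailingCoeff := by
  set r := A.charpoly.natTrailingDegree
  have hr : r ≤ Fintype.card ι :=
    charpoly_natDegree_eq_dim A ▸ natTrailingDegree_le_natDegree _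
  have h := coeff_charpoly_smul_mul_pow c A r
  rw [← Nat.sub_add_cancel hr, pow_add, mul_right_comm] at h
  rw [trailingCoeff, natTrailingDegree_charpoly_smul hc]
  exact mul_right_cancel₀ (pow_ne_zero r hc) h

end Matrix

section pdet

variable {R : Type*} [CommRing R] {n : ℕ}

theorem pdet_map {S : Type*} [CommRing S] {f : R →+* S} (hf : Function.Injective f)
    (L : Matrix (Fin n) (Fin n) R) : pdet (L.map f) = f (pdet L) := by
  rw [pdet, pdet, ← trailingCoeff_map_of_injective hf, ← charpoly_map,
    Matrix.map_neg _ (map_neg f)]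

theorem pdet_transpose (L : Matrix (Fin n) (Fin n) R) : pdet Lᵀ = pdet L := by
  rw [pdet, pdet, ← transpose_neg, charpoly_transpose]

variable [IsDomain R]

theorem pdet_smul {c : R} (hc : c ≠ 0) (L : Matrix (Fin n) (Fin n) R) :
    pdet (c • L) = c ^ (n - (-L).charpoly.natTrailingDegree) * pdet L := by
  rw [pdet, pdet, ← smul_neg, trailingCoeff_charpoly_smul hc, Fintype.card_fin]

theorem pdet_neg_mul_self (A : Matrix (Fin n) (Fin n) R) :
    pdet (-(A * A)) = pdet (-A) * pdet A := by
  rw [pdet, pdet, pdet, neg_neg, neg_neg, ← trailingCoeff_expand two_pos, expand_eq_comp_X_pow,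
    charpoly_mul_self_comp_X_sq, trailingCoeff_mul]

theorem pdet_mul_self_of_mul_self_eq_neg_one {i : R} (hi : i * i = -1)
    (A : Matrix (Fin n) (Fin n) R) : pdet (A * A) = pdet A ^ 2 := by
  have hi0 : i ≠ 0 := by
    rintro rfl
    simp at hi
  have hA : A * A = -((i • A) * (i • A)) := by
    rw [smul_mul_smul_comm, hi, neg_smul, one_smul, neg_neg]
  rw [hA, pdet_neg_mul_self, ← neg_smul, pdet_smul (neg_ne_zero.mpr hi0), pdet_smul hi0,
    mul_mul_mul_comm, ← mul_pow, neg_mul, hi, neg_neg, one_pow, one_mul, sq]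

theorem pdet_mul_self (A : Matrix (Fin n) (Fin n) R) : pdet (A * A) = pdet A ^ 2 := by
  let f : R →+* AlgebraicClosure (FractionRing R) :=
    (algebraMap (FractionRing R) _).comp (algebraMap R (FractionRing R))
  have hf : Function.Injective f :=
    (algebraMap (FractionRing R) _).injective.comp (IsFractionRing.injective R _)
  obtain ⟨i, hi⟩ := IsAlgClosed.exists_eq_mul_self (-1 : AlgebraicClosure (FractionRing R))
  apply hf
  rw [map_pow, ← pdet_map hf, ← pdet_map hf, Matrix.map_mul,
    pdet_mul_self_of_mul_self_eq_neg_one hi.symm]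

end pdet

/-- For a real symmetric or skew-symmetric matrix, `pdet (MMᵗ) = (pdet M)²`. -/
theorem pdet_self_mul_transpose {n : ℕ}
    (M : Matrix (Fin n) (Fin n) ℝ) (hsym : M.transpose = M ∨ M.transpose = -M) :
    pdet (M * M.transpose) = (pdet M) ^ 2 := by
  rcases hsym with h | h
  · rw [h]
    exact pdet_mul_self M
  · rw [h, mul_neg, pdet_neg_mul_self, ← h, pdet_transpose, sq]
end

section
/- Let ∂ = ∂_k be the k-th simplicial boundary map of the full simplex on n = 2k+1 vertices, viewed as a C(n,k+1)×C(n,k+1) matrix from k-faces to (k-1)-faces (via the bijection between k-faces and (k-1)-faces given by complementation). Then ∂∂ᵗ has characteristic polynomial det(tI − ∂∂ᵗ) = t^B·(t − n)^C, where B = C(n−1, k+1) and C = C(n−1, k); in particular ∂∂ᵗ has single nonzero eigenvalue n with multiplicity C(2k, k). -/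
/-! The boundary of the full simplex on `n` vertices is the sum `∂ = ∑ᵥ ιᵥ` of the contractions
`ιᵥ s = ±(s \ {v})`. These satisfy the canonical anticommutation relations
`ιᵤ ιᵥ + ιᵥ ιᵤ = 0` and `ιᵤ ιᵥᵀ + ιᵥᵀ ιᵤ = δᵤᵥ`, whence `∂² = 0` and `∂∂ᵀ + ∂ᵀ∂ = n`.
Restricting to faces of one dimension, `(∂∂ᵀ)² = ∂ (n - ∂'∂'ᵀ) ∂ᵀ = n ∂∂ᵀ`, so the symmetric
matrix `∂∂ᵀ` has only the eigenvalues `0` and `n`, and the multiplicity of `n` is read off from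
`tr ∂∂ᵀ = tr ∂ᵀ∂ = (k + 1) · C(n, k + 1)`. Relabelling the rows by complements conjugates `∂∂ᵀ`
by a permutation. -/

open Polynomial Finset

/-- The middle boundary map of the simplex on `n = 2k+1` vertices, written as a
square matrix whose columns are indexed by `k`-faces (i.e. `(k+1)`-subsets of the
vertex set) and whose rows are indexed by `(k-1)`-faces via the complementation
bijection: the row labelled by the `(k+1)`-subset `σ` stands for the `(k-1)`-face
`σᶜ`.  The entry in row `σ`, column `τ` is the signed incidence number of the
face `σᶜ` in `∂τ = Σⱼ (-1)^(j-1) (τ ∖ {vⱼ})`. -/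
noncomputable def simplexMiddleBoundary (k : ℕ) :
    Matrix {s : Finset (Fin (2 * k + 1)) // s.card = k + 1}
           {s : Finset (Fin (2 * k + 1)) // s.card = k + 1} ℝ :=
  fun σ τ => ∑ v ∈ τ.1,
    if τ.1.erase v = (σ.1)ᶜ then (-1 : ℝ) ^ ((τ.1.filter (fun w => w < v)).card) else 0

theorem Matrix.IsHermitian.eigenvalues_eq_zero_or_eq_of_mul_self_eq_smul {m : Type*} [Fintype m]
    [DecidableEq m] {A : Matrix m m ℝ} (hA : A.IsHermitian) {c : ℝ} (hAA : A * A = c • A)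
    (i : m) : hA.eigenvalues i = 0 ∨ hA.eigenvalues i = c := by
  have : Nonempty m := ⟨i⟩
  have hmem := spectrum.subset_polynomial_aeval A (X * (X - C c))
    ⟨_, hA.eigenvalues_mem_spectrum_real i, rfl⟩
  rw [map_mul, map_sub, aeval_X, aeval_C, Algebra.algebraMap_eq_smul_one, mul_sub, hAA,
    mul_smul_comm, mul_one, sub_self, spectrum.zero_eq, Set.mem_singleton_iff] at hmem
  simpa [sub_eq_zero] using hmem

theorem Matrix.IsHermitian.charpoly_of_mul_self_eq_smul {m : Type*} [Fintype m] [DecidableEq m]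
    {A : Matrix m m ℝ} (hA : A.IsHermitian) {c : ℝ} (hc : c ≠ 0) (hAA : A * A = c • A) {r : ℕ}
    (htr : A.trace = r * c) :
    A.charpoly = X ^ (Fintype.card m - r) * (X - C c) ^ r := by
  have heig := hA.eigenvalues_eq_zero_or_eq_of_mul_self_eq_smul hAA
  have hS : #{i | hA.eigenvalues i = c} = r := by
    have hsum : ∑ i, hA.eigenvalues i = #{i | hA.eigenvalues i = c} * c := by
      rw [← sum_filter_add_sum_filter_not univ (fun i => hA.eigenvalues i = c),
        sum_congr rfl fun i hi => (mem_filter.1 hi).2,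
        sum_eq_zero fun i hi => (heig i).resolve_right (mem_filter.1 hi).2, sum_const,
        nsmul_eq_mul, add_zero]
    have htr' : A.trace = ∑ i, hA.eigenvalues i := by
      simpa using hA.trace_eq_sum_eigenvalues
    exact_mod_cast (mul_right_cancel₀ hc (htr.symm.trans (htr'.trans hsum))).symm
  have hS' : #{i | ¬hA.eigenvalues i = c} = Fintype.card m - r := by
    have := card_filter_add_card_filter_not (s := univ) (fun i => hA.eigenvalues i = c)
    rw [card_univ] at this
    omega
  have hprod : ∏ i with hA.eigenvalues i = c, (X - C (hA.eigenvalues i)) = (X - C c) ^ r := by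
    rw [← hS, ← prod_const]
    exact prod_congr rfl fun i hi => by rw [(mem_filter.1 hi).2]
  have hprod' : ∏ i with ¬hA.eigenvalues i = c, (X - C (hA.eigenvalues i)) =
      X ^ (Fintype.card m - r) := by
    rw [← hS', ← prod_const]
    exact prod_congr rfl fun i hi => by
      rw [(heig i).resolve_right (mem_filter.1 hi).2, map_zero, sub_zero]
  rw [hA.charpoly_eq, ← prod_filter_mul_prod_filter_not univ (fun i => hA.eigenvalues i = c),
    mul_comm]
  simp only [RCLike.ofReal_real_eq_id, id_eq, hprod, hprod']

open scoped Matrix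

theorem Matrix.submatrix_val_mul_submatrix_val {l m o l' o' α : Type*} [Fintype m]
    [NonUnitalNonAssocSemiring α] {p : m → Prop} [DecidablePred p] {A : Matrix l m α}
    {B : Matrix m o α} {e₁ : l' → l} {e₃ : o' → o} (hA : ∀ i j, ¬p j → A (e₁ i) j = 0) :
    A.submatrix e₁ (Subtype.val : Subtype p → m) * B.submatrix (Subtype.val : Subtype p → m) e₃ =
      (A * B).submatrix e₁ e₃ := by
  ext i k
  rw [Matrix.mul_apply, Matrix.submatrix_apply, Matrix.mul_apply]
  refine (sum_subtype {j | p j} (fun j => by simp) (fun j => A (e₁ i) j * B j (e₃ k))).symm.trans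
    (sum_filter_of_ne fun j _ hj => not_not.1 fun hp => hj (by rw [hA i j hp, zero_mul]))

namespace FullSimplex

variable {n : ℕ}

def faceSign (s : Finset (Fin n)) (v : Fin n) : ℝ := (-1) ^ #{w ∈ s | w < v}

theorem faceSign_mul_self (s : Finset (Fin n)) (v : Fin n) : faceSign s v * faceSign s v = 1 := by
  rw [faceSign, ← pow_add, Even.neg_one_pow ⟨_, rfl⟩]

theorem faceSign_of_mem {s : Finset (Fin n)} {u : Fin n} (hu : u ∈ s) (v : Fin n) :
    faceSign s v = (if u < v then -1 else 1) * faceSign (s.erase u) v := by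
  rw [faceSign, faceSign, filter_erase]
  split_ifs with huv
  · rw [← card_erase_add_one (mem_filter.2 ⟨hu, huv⟩), pow_succ, mul_comm]
  · rw [erase_eq_of_notMem (a := u) (fun h => huv (mem_filter.1 h).2), one_mul]

theorem neg_one_ite_lt_add_swap {α : Type*} [LinearOrder α] {u v : α} (huv : u ≠ v) :
    (if u < v then (-1 : ℝ) else 1) + (if v < u then -1 else 1) = 0 := by
  rcases huv.lt_or_gt with h | h <;> simp [h, h.not_gt]

theorem neg_one_ite_lt_mul_swap {α : Type*} [LinearOrder α] {u v : α} (huv : u ≠ v) :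
    (if u < v then (-1 : ℝ) else 1) * (if v < u then -1 else 1) = -1 := by
  rcases huv.lt_or_gt with h | h <;> simp [h, h.not_gt]

def contraction (v : Fin n) : Matrix (Finset (Fin n)) (Finset (Fin n)) ℝ :=
  Matrix.of fun t s => if v ∈ s ∧ s.erase v = t then faceSign s v else 0

theorem contraction_mul_contraction_apply (u v : Fin n) (t s : Finset (Fin n)) :
    (contraction u * contraction v) t s =
      if u ∈ s ∧ v ∈ s ∧ u ≠ v ∧ (s.erase v).erase u = t
      then faceSign (s.erase v) u * faceSign s v else 0 := by
  rw [Matrix.mul_apply, Fintype.sum_eq_single (s.erase v)]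
  · by_cases hv : v ∈ s <;> by_cases hu : u ∈ s <;> by_cases huv : u = v <;>
      simp [contraction, hu, hv, huv]
  · intro r hr
    simp [contraction, Ne.symm hr]

theorem contraction_mul_transpose_apply (u v : Fin n) (t s : Finset (Fin n)) :
    (contraction u * (contraction v)ᵀ) t s =
      if u ∉ t ∧ v ∈ insert u t ∧ (insert u t).erase v = s
      then faceSign (insert u t) u * faceSign (insert u t) v else 0 := by
  rw [Matrix.mul_apply, Fintype.sum_eq_single (insert u t)]
  · by_cases hu : u ∈ t <;> simp [contraction, hu]
  · intro r hr
    rw [Matrix.transpose_apply, contraction, Matrix.of_apply, if_neg, zero_mul]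
    rintro ⟨hu, rfl⟩
    exact hr (insert_erase hu).symm

theorem transpose_mul_contraction_apply (u v : Fin n) (t s : Finset (Fin n)) :
    ((contraction v)ᵀ * contraction u) t s =
      if v ∈ t ∧ u ∈ s ∧ s.erase u = t.erase v then faceSign t v * faceSign s u else 0 := by
  rw [Matrix.mul_apply, Fintype.sum_eq_single (t.erase v)]
  · by_cases hv : v ∈ t <;> simp [contraction, hv]
  · intro r hr
    simp [contraction, Ne.symm hr]

theorem contraction_mul_contraction_add_swap (u v : Fin n) :
    contraction u * contraction v + contraction v * contraction u = 0 := by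
  ext t s
  rw [Matrix.add_apply, contraction_mul_contraction_apply, contraction_mul_contraction_apply,
    Matrix.zero_apply, erase_right_comm (a := v)]
  by_cases h : u ∈ s ∧ v ∈ s ∧ u ≠ v ∧ (s.erase u).erase v = t
  · obtain ⟨hu, hv, huv, he⟩ := h
    rw [if_pos ⟨hu, hv, huv, he⟩, if_pos ⟨hv, hu, huv.symm, he⟩, faceSign_of_mem hu v,
      faceSign_of_mem hv u]
    linear_combination (faceSign (s.erase u) v * faceSign (s.erase v) u) *
      neg_one_ite_lt_add_swap huv
  · rw [if_neg h, if_neg fun ⟨hv, hu, hvu, he⟩ => h ⟨hu, hv, hvu.symm, he⟩, add_zero]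

theorem contraction_mul_transpose_add (u v : Fin n) :
    contraction u * (contraction v)ᵀ + (contraction v)ᵀ * contraction u =
      if u = v then 1 else 0 := by
  ext t s
  rw [Matrix.add_apply, contraction_mul_transpose_apply, transpose_mul_contraction_apply]
  by_cases huv : u = v
  · subst huv
    rw [if_pos rfl, Matrix.one_apply]
    by_cases hu : u ∈ t
    · have : u ∈ s ∧ s.erase u = t.erase u ↔ t = s := by
        refine ⟨fun ⟨hs, he⟩ => ?_, by rintro rfl; exact ⟨hu, rfl⟩⟩
        rw [← insert_erase hu, ← he, insert_erase hs]
      simp only [hu, not_true_eq_false, false_and, if_false, true_and, this, zero_add,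
]
      split_ifs with hts
      · rw [hts, faceSign_mul_self]
      · rfl
    · simp [hu, faceSign_mul_self, erase_insert hu]
  · rw [if_neg huv, Matrix.zero_apply]
    have hcond : (u ∉ t ∧ v ∈ insert u t ∧ (insert u t).erase v = s) ↔
        (v ∈ t ∧ u ∈ s ∧ s.erase u = t.erase v) := by
      constructor
      · rintro ⟨hu, hv, rfl⟩
        refine ⟨(mem_insert.1 hv).resolve_left (Ne.symm huv),
          mem_erase.2 ⟨huv, mem_insert_self u t⟩, ?_⟩
        rw [erase_right_comm, erase_insert hu]
      · rintro ⟨hv, hu, he⟩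
        refine ⟨fun h => notMem_erase u s (he ▸ mem_erase.2 ⟨huv, h⟩), mem_insert_of_mem hv, ?_⟩
        rw [erase_insert_of_ne huv, ← he, insert_erase hu]
    split_ifs with h₁ h₂ h₂
    · obtain ⟨hu, hv, rfl⟩ := h₁
      rw [faceSign_of_mem hv u, faceSign_of_mem (mem_insert_self u t) v, erase_insert hu]
      linear_combination (faceSign ((insert u t).erase v) u * faceSign t v) *
        neg_one_ite_lt_mul_swap (Ne.symm huv)
    · exact absurd (hcond.1 h₁) h₂
    · exact absurd (hcond.2 h₂) h₁
    · rw [add_zero]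

variable (n) in
def boundary : Matrix (Finset (Fin n)) (Finset (Fin n)) ℝ := ∑ v, contraction v

theorem boundary_mul_boundary : boundary n * boundary n = 0 := by
  have h : boundary n * boundary n + boundary n * boundary n = 0 := by
    conv_lhs => enter [2]; rw [boundary, sum_mul_sum, sum_comm]
    rw [boundary, sum_mul_sum, ← sum_add_distrib]
    exact sum_eq_zero fun u _ => by
      rw [← sum_add_distrib]
      exact sum_eq_zero fun v _ => contraction_mul_contraction_add_swap u v
  rwa [← two_smul ℝ, smul_eq_zero, or_iff_right two_ne_zero] at h

theorem boundary_mul_transpose_add :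
    boundary n * (boundary n)ᵀ + (boundary n)ᵀ * boundary n = (n : ℝ) • 1 := by
  rw [boundary, Matrix.transpose_sum, sum_mul_sum, sum_mul_sum, sum_comm (s := univ) (t := univ)
    (f := fun v u => (contraction v)ᵀ * contraction u), ← sum_add_distrib]
  simp_rw [← sum_add_distrib, contraction_mul_transpose_add, sum_ite_eq, if_pos (mem_univ _),
    sum_const, card_univ, Fintype.card_fin, Nat.cast_smul_eq_nsmul]

theorem boundary_apply_eq_zero {t s : Finset (Fin n)} (h : #s ≠ #t + 1) : boundary n t s = 0 := by
  rw [boundary, Matrix.sum_apply]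
  refine sum_eq_zero fun v _ => if_neg ?_
  rintro ⟨hv, rfl⟩
  exact h (card_erase_add_one hv).symm

theorem transpose_boundary_mul_boundary_apply_self (s : Finset (Fin n)) :
    ((boundary n)ᵀ * boundary n) s s = #s := by
  rw [boundary, Matrix.transpose_sum, sum_mul_sum, Matrix.sum_apply]
  simp_rw [Matrix.sum_apply, transpose_mul_contraction_apply]
  have hrow (v : Fin n) : (∑ u, if v ∈ s ∧ u ∈ s ∧ s.erase u = s.erase v
      then faceSign s v * faceSign s u else 0) = if v ∈ s then 1 else 0 := by
    by_cases hv : v ∈ s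
    · have hu (u : Fin n) : u ∈ s ∧ s.erase u = s.erase v ↔ u = v :=
        ⟨fun ⟨hu, he⟩ => (erase_inj s hu).1 he, by rintro rfl; exact ⟨hv, rfl⟩⟩
      simp only [hv, true_and, hu, if_true, sum_ite_eq', mem_univ, faceSign_mul_self]
    · simp only [hv, false_and, if_false, sum_const_zero]
  simp_rw [hrow, sum_boole, filter_mem_eq_inter, univ_inter]

variable (n) in
def gradedBoundary (m : ℕ) :
    Matrix {t : Finset (Fin n) // #t = m} {s : Finset (Fin n) // #s = m + 1} ℝ :=
  (boundary n).submatrix Subtype.val Subtype.val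

theorem gradedBoundary_mul_gradedBoundary (m : ℕ) :
    gradedBoundary n m * gradedBoundary n (m + 1) = 0 := by
  rw [gradedBoundary, gradedBoundary, Matrix.submatrix_val_mul_submatrix_val (p := (#· = m + 1))
    fun t s hs => boundary_apply_eq_zero (by rw [t.2]; exact hs), boundary_mul_boundary]
  rfl

theorem transpose_gradedBoundary_mul_add (m : ℕ) :
    (gradedBoundary n m)ᵀ * gradedBoundary n m +
      gradedBoundary n (m + 1) * (gradedBoundary n (m + 1))ᵀ = (n : ℝ) • 1 := by
  rw [gradedBoundary, gradedBoundary, Matrix.transpose_submatrix, Matrix.transpose_submatrix,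
    Matrix.submatrix_val_mul_submatrix_val (A := (boundary n)ᵀ) (p := (#· = m))
      fun s t ht => boundary_apply_eq_zero (by rw [s.2]; omega),
    Matrix.submatrix_val_mul_submatrix_val (p := (#· = m + 1 + 1))
      fun s r hr => boundary_apply_eq_zero (by rw [s.2]; exact hr)]
  calc _ = (boundary n * (boundary n)ᵀ + (boundary n)ᵀ * boundary n).submatrix
        Subtype.val Subtype.val := add_comm _ _
    _ = _ := by
      rw [boundary_mul_transpose_add]
      ext s t
      simp [Matrix.one_apply, Subtype.ext_iff]

theorem trace_transpose_gradedBoundary_mul (m : ℕ) :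
    ((gradedBoundary n m)ᵀ * gradedBoundary n m).trace = (m + 1) * n.choose (m + 1) := by
  rw [gradedBoundary, Matrix.transpose_submatrix, Matrix.submatrix_val_mul_submatrix_val
    (A := (boundary n)ᵀ) (p := (#· = m)) fun s t ht => boundary_apply_eq_zero (by rw [s.2]; omega)]
  rw [Matrix.trace, sum_congr rfl fun s _ => by
    rw [Matrix.diag_apply, Matrix.submatrix_apply, transpose_boundary_mul_boundary_apply_self, s.2]]
  simp only [sum_const, card_univ, Fintype.card_finset_len, Fintype.card_fin, nsmul_eq_mul]
  push_cast
  ring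

theorem gradedBoundary_mul_transpose_mul_self (m : ℕ) :
    gradedBoundary n m * (gradedBoundary n m)ᵀ * (gradedBoundary n m * (gradedBoundary n m)ᵀ) =
      (n : ℝ) • (gradedBoundary n m * (gradedBoundary n m)ᵀ) := by
  set B := gradedBoundary n m
  set B' := gradedBoundary n (m + 1)
  have hBB' : B'ᵀ * Bᵀ = 0 := by
    rw [← Matrix.transpose_mul, gradedBoundary_mul_gradedBoundary, Matrix.transpose_zero]
  calc B * Bᵀ * (B * Bᵀ) = B * (Bᵀ * B) * Bᵀ := by simp only [Matrix.mul_assoc]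
    _ = B * ((n : ℝ) • 1 - B' * B'ᵀ) * Bᵀ := by
      rw [← transpose_gradedBoundary_mul_add m, add_sub_cancel_right]
    _ = (n : ℝ) • (B * Bᵀ) - B * B' * (B'ᵀ * Bᵀ) := by
      simp only [Matrix.mul_sub, Matrix.sub_mul, Matrix.mul_smul, Matrix.smul_mul,
        Matrix.mul_one, Matrix.mul_assoc]
    _ = (n : ℝ) • (B * Bᵀ) := by rw [hBB', Matrix.mul_zero, sub_zero]

theorem charpoly_gradedBoundary_mul_transpose (n m : ℕ) :
    (gradedBoundary (n + 1) m * (gradedBoundary (n + 1) m)ᵀ).charpoly =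
      X ^ ((n + 1).choose m - n.choose m) * (X - C ((n + 1 : ℕ) : ℝ)) ^ n.choose m := by
  have hcard : Fintype.card {t : Finset (Fin (n + 1)) // #t = m} = (n + 1).choose m := by
    rw [Fintype.card_finset_len, Fintype.card_fin]
  have hB := Matrix.isHermitian_mul_conjTranspose_self (gradedBoundary (n + 1) m)
  rw [Matrix.conjTranspose_eq_transpose_of_trivial] at hB
  rw [← hcard]
  refine hB.charpoly_of_mul_self_eq_smul (by positivity)
    (gradedBoundary_mul_transpose_mul_self m) ?_
  rw [Matrix.trace_mul_comm, trace_transpose_gradedBoundary_mul]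
  have h : ((m + 1) * (n + 1).choose (m + 1) : ℕ) = n.choose m * (n + 1) := by
    rw [mul_comm, ← Nat.add_one_mul_choose_eq, mul_comm]
  exact_mod_cast h

end FullSimplex

def Finset.cardComplEquiv {α : Type*} [Fintype α] [DecidableEq α] {a b : ℕ}
    (h : a + b = Fintype.card α) : {s : Finset α // #s = a} ≃ {s : Finset α // #s = b} where
  toFun s := ⟨s.1ᶜ, by rw [card_compl, s.2]; omega⟩
  invFun s := ⟨s.1ᶜ, by rw [card_compl, s.2]; omega⟩
  left_inv s := Subtype.ext (compl_compl s.1)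
  right_inv s := Subtype.ext (compl_compl s.1)

theorem simplexMiddleBoundary_eq_submatrix (k : ℕ) :
    simplexMiddleBoundary k = (FullSimplex.gradedBoundary (2 * k + 1) k).submatrix
      (cardComplEquiv (by rw [Fintype.card_fin]; ring)) id := by
  ext σ τ
  simp only [simplexMiddleBoundary, FullSimplex.gradedBoundary, FullSimplex.boundary,
    FullSimplex.contraction, FullSimplex.faceSign, cardComplEquiv, Equiv.coe_fn_mk,
    Matrix.submatrix_apply, id_eq, Matrix.sum_apply, Matrix.of_apply, ite_and]
  rw [sum_ite_mem, univ_inter]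

theorem simplex_middle_laplacian_charpoly_general (k : ℕ) :
    (simplexMiddleBoundary k * (simplexMiddleBoundary k).transpose).charpoly
      = Polynomial.X ^ (Nat.choose (2 * k) (k + 1))
        * (Polynomial.X - Polynomial.C ((2 * k + 1 : ℕ) : ℝ)) ^ (Nat.choose (2 * k) k) := by
  have hchoose : (2 * k + 1).choose k - (2 * k).choose k = (2 * k).choose (k + 1) := by
    rw [← Nat.choose_symm_half, Nat.choose_succ_succ']
    omega
  rw [simplexMiddleBoundary_eq_submatrix, Matrix.transpose_submatrix,
    ← Matrix.submatrix_mul _ _ _ _ _ Function.bijective_id, ← Equiv.symm_symm (cardComplEquiv _),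
    ← Matrix.reindex_apply, Matrix.charpoly_reindex,
    FullSimplex.charpoly_gradedBoundary_mul_transpose, hchoose]

/-- For the simplex on `n = 2k+1` vertices, `det(tI - ∂∂ᵗ) = t^B (t-n)^C` with
`B = C(n-1, k+1)` and `C = C(n-1, k)`; in particular `∂∂ᵗ` has the single nonzero
eigenvalue `n` with multiplicity `C(2k, k)`. -/
theorem simplex_middle_laplacian_charpoly (k : ℕ) (hk : 1 ≤ k) :
    (simplexMiddleBoundary k * (simplexMiddleBoundary k).transpose).charpoly
      = Polynomial.X ^ (Nat.choose (2 * k) (k + 1))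
        * (Polynomial.X - Polynomial.C ((2 * k + 1 : ℕ) : ℝ)) ^ (Nat.choose (2 * k) k) :=
  simplex_middle_laplacian_charpoly_general k
end
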